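/- arXiv:2111.09987 — 10 statements merged into one kernel-verified Lean document; each statement's English description precedes it below -/
import Mathlib

section
/- Let G be a finite geodetic graph and v a vertex of G. If u and u' are two distinct neighbors of v that lie in the same connected component of the subgraph of G induced by the open neighborhood of v, then u and u' are adjacent in G. In other words, the vertices adjacent to v split into vertex-disjoint complete subgraphs of G. -/
open SimpleGraph

/-- A graph is *geodetic* if it is connected and between any two vertices
there is exactly one shortest path (geodesic). -/
def IsGeodetic {V : Type*} (G : SimpleGraph V) : Prop :=
  G.Connected ∧ ∀ u v : V, ∃! p : G.Walk u v, p.IsPath ∧ p.length = G.dist u v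

lemma key_two_paths {V : Type*} (G : SimpleGraph V) (hG : IsGeodetic G) {a b x y : V}
    (hab : a ≠ b) (hxy : x ≠ y) (hax : G.Adj a x) (hxb : G.Adj x b)
    (hay : G.Adj a y) (hyb : G.Adj y b) : G.Adj a b := by
  by_contra hnadj
  set p1 : G.Walk a b := .cons hax (.cons hxb .nil) with hp1
  set p2 : G.Walk a b := .cons hay (.cons hyb .nil) with hp2
  have hp1path : p1.IsPath := by
    simp [hp1, Walk.isPath_def, hax.ne, hab, hxb.ne]
  have hp2path : p2.IsPath := by
    simp [hp2, Walk.isPath_def, hay.ne, hab, hyb.ne]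
  have hdle : G.dist a b ≤ 2 := by
    have := SimpleGraph.dist_le p1
    simpa [hp1] using this
  have hd0 : G.dist a b ≠ 0 := by
    simp [SimpleGraph.dist_eq_zero_iff_eq_or_not_reachable, hab,
      (hG.1.preconnected a b)]
  have hd1 : G.dist a b ≠ 1 := by
    intro h
    exact hnadj ((G.dist_eq_one_iff_adj).mp h)
  have hd2 : G.dist a b = 2 := by omega
  obtain ⟨p, _, hu⟩ := hG.2 a b
  have h1 : p1 = p := hu p1 ⟨hp1path, by simp [hp1, hd2]⟩
  have h2 : p2 = p := hu p2 ⟨hp2path, by simp [hp2, hd2]⟩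
  have : p1.getVert 1 = p2.getVert 1 := by rw [h1, h2]
  simp [hp1, hp2] at this
  exact hxy this

/-- In a finite geodetic graph, if two distinct neighbors `u, u'` of a vertex `v` lie in the
same connected component of the subgraph induced by the open neighborhood of `v`, then they
are adjacent.  (So the neighborhood of `v` splits into vertex-disjoint complete subgraphs.) -/
theorem stmt_1 {V : Type*} [Fintype V] (G : SimpleGraph V) (hG : IsGeodetic G)
    (v : V) (u u' : G.neighborSet v) (hne : u ≠ u')
    (hreach : (G.induce (G.neighborSet v)).Reachable u u') :
    G.Adj u.val u'.val := by
  obtain ⟨w⟩ := hreach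
  have main : ∀ (a b : G.neighborSet v) (_ : (G.induce (G.neighborSet v)).Walk a b),
      a = b ∨ G.Adj a.val b.val := by
    intro a b p
    induction p with
    | nil => exact Or.inl rfl
    | @cons a c b h p ih =>
      have hac : G.Adj a.val c.val := h
      rcases ih with rfl | hcb
      · exact Or.inr hac
      · by_cases hab : a = b
        · exact Or.inl hab
        · right
          have hav : G.Adj a.val v := a.2.symm
          have hvb : G.Adj v b.val := b.2
          have hcv : c.val ≠ v := fun hh => G.irrefl (hh ▸ c.2)
          exact key_two_paths G hG (fun hh => hab (Subtype.ext hh)) hcv hac hcb hav hvb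
  rcases main u u' w with rfl | hadj
  · exact absurd rfl hne
  · exact hadj
end

section
/- Let G be a finite geodetic graph on at least 3 vertices that is two-connected (i.e. G is connected and G − x is connected for every vertex x), is not a complete graph, and contains a clique on m vertices for some m > 1. Then G contains the star K_{1,m} as an induced subgraph. -/
open SimpleGraph

/-
Extend the clique to a maximal clique `A`. In a geodetic graph every geodesic leaves a vertex
through a unique first step; consequently a vertex outside `A` never sees two vertices of `A` at
the same distance `k` and a third one at distance `k + 1`. If no vertex outside `A` were
equidistant from `A`, every vertex outside `A` would thus have a unique nearest vertex, its gate,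
in `A`; adjacent vertices outside `A` share their gate, so a vertex gated by `g` could not reach
the rest of `A` in `G - g`, against two-connectivity. Hence there is a vertex `c` outside `A`
equidistant from `A`, and we take one at minimal distance `k`. The first steps of the geodesics
from `c` to the vertices of `A` are then pairwise distinct and non-adjacent, since otherwise one of
them would be a closer equidistant vertex or a geodesic would have two first steps; together with
`c` they span an induced star.
-/

namespace SimpleGraph

variable {V : Type*} {G : SimpleGraph V} {A : Set V} {a b c u v w x y : V}

lemma Connected.exists_adj_dist_add_one_eq (hG : G.Connected) (huv : u ≠ v) :
    ∃ w, G.Adj u w ∧ G.dist w v + 1 = G.dist u v := by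
  obtain ⟨p, hp⟩ := hG.exists_walk_length_eq_dist u v
  cases p with
  | nil => exact absurd rfl huv
  | @cons _ w _ h q =>
    refine ⟨w, h, le_antisymm ?_ ?_⟩
    · have := dist_le q
      rw [Walk.length_cons] at hp
      omega
    · have := hG.dist_triangle (u := u) (v := w) (w := v)
      rw [dist_eq_one_iff_adj.mpr h] at this
      omega

lemma Connected.dist_add_one_eq_of_adj (hG : G.Connected) (hvy : G.Adj v y)
    (hy : G.dist y a + 1 = G.dist v a) (hab : G.Adj a b) (hb : G.dist v b = G.dist v a + 1) :
    G.dist y b + 1 = G.dist v b := by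
  have hyb := hG.dist_triangle (u := y) (v := a) (w := b)
  have hvb := hG.dist_triangle (u := v) (v := y) (w := b)
  rw [dist_eq_one_iff_adj.mpr hab] at hyb
  rw [dist_eq_one_iff_adj.mpr hvy] at hvb
  omega

lemma IsClique.dist_le_one (hA : G.IsClique A) (ha : a ∈ A) (hb : b ∈ A) : G.dist a b ≤ 1 := by
  rcases eq_or_ne a b with rfl | hab
  · simp
  · exact (dist_eq_one_iff_adj.mpr (hA ha hb hab)).le

lemma mem_of_maximal_isClique_of_forall_adj (hA : Maximal G.IsClique A)
    (hv : ∀ u ∈ A, G.Adj v u) : v ∈ A :=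
  hA.mem_of_prop_insert (hA.1.insert fun u hu _ => hv u hu)

def IsEquidistant (G : SimpleGraph V) (A : Set V) (c : V) : Prop :=
  ∀ a ∈ A, ∀ b ∈ A, G.dist c a = G.dist c b

/-- `g` is a gate of `v` in `A`: it lies on a geodesic from `v` to every vertex of `A`. -/
def IsGate (G : SimpleGraph V) (A : Set V) (v g : V) : Prop :=
  g ∈ A ∧ ∀ a ∈ A, G.dist v g + G.dist g a = G.dist v a

def IsNearestEquidistant (G : SimpleGraph V) (A : Set V) (c : V) : Prop :=
  c ∉ A ∧ G.IsEquidistant A c ∧ ∀ c' ∉ A, G.IsEquidistant A c' → ∀ a ∈ A, G.dist c a ≤ G.dist c' a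

lemma IsGate.dist_eq_add_one (h : G.IsGate A v x) (hA : G.IsClique A) (ha : a ∈ A)
    (hax : a ≠ x) : G.dist v a = G.dist v x + 1 := by
  rw [← h.2 a ha, dist_eq_one_iff_adj.mpr (hA h.1 ha hax.symm)]

lemma notMem_of_adj_of_isEquidistant (hA : Maximal G.IsClique A) (hc : c ∉ A)
    (hcA : G.IsEquidistant A c) (hcy : G.Adj c y) : y ∉ A := fun hy =>
  hc <| mem_of_maximal_isClique_of_forall_adj hA fun u hu =>
    dist_eq_one_iff_adj.mp <| (hcA u hu y hy).trans (dist_eq_one_iff_adj.mpr hcy)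

lemma nonempty_completeBipartiteGraph_embedding {α ι : Type*} [Unique α] (f : ι → V)
    (hf : Function.Injective f) (hadj : ∀ i, G.Adj c (f i)) (hind : ∀ i j, ¬ G.Adj (f i) (f j)) :
    Nonempty (completeBipartiteGraph α ι ↪g G) := by
  have hinj : Function.Injective (Sum.elim (fun _ : α => c) f) := by
    rintro (i | i) (j | j) h
    · rw [Subsingleton.elim i j]
    · exact absurd h (hadj j).ne
    · exact absurd h.symm (hadj i).ne
    · exact congrArg Sum.inr (hf h)
  refine ⟨⟨⟨_, hinj⟩, fun {x y} => ?_⟩⟩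
  cases x <;> cases y <;> simp [hadj, (hadj _).symm, hind]

end SimpleGraph

namespace IsGeodetic

variable {V : Type*} {G : SimpleGraph V} {A : Set V} {a b b' c u v w x y : V}

lemma walk_eq (hG : IsGeodetic G) {p q : G.Walk u v} (hp : p.length = G.dist u v)
    (hq : q.length = G.dist u v) : p = q :=
  (hG.2 u v).unique ⟨p.isPath_of_length_eq_dist hp, hp⟩ ⟨q.isPath_of_length_eq_dist hq, hq⟩

lemma eq_of_adj_of_dist_add_one_eq (hG : IsGeodetic G) (hux : G.Adj u x) (huy : G.Adj u y)
    (hx : G.dist x v + 1 = G.dist u v) (hy : G.dist y v + 1 = G.dist u v) : x = y := by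
  obtain ⟨p, hp⟩ := hG.1.exists_walk_length_eq_dist x v
  obtain ⟨q, hq⟩ := hG.1.exists_walk_length_eq_dist y v
  have h := hG.walk_eq (p := .cons hux p) (q := .cons huy q) (by simp [hp, hx])
    (by simp [hq, hy])
  injection h

lemma eq_of_adj_of_adj_of_not_adj (hG : IsGeodetic G) (hva : G.Adj v a) (hau : G.Adj a u)
    (hvb : G.Adj v b) (hbu : G.Adj b u) (hvu : v ≠ u) (hnadj : ¬ G.Adj v u) : a = b := by
  have hd : G.dist v u = 2 := by
    have hle : G.dist v u ≤ 2 := dist_le (.cons hva (.cons hau .nil))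
    have := hG.1.one_lt_dist_of_ne_of_not_adj hvu hnadj
    omega
  exact hG.eq_of_adj_of_dist_add_one_eq hva hvb (by rw [dist_eq_one_iff_adj.mpr hau, hd])
    (by rw [dist_eq_one_iff_adj.mpr hbu, hd])

/-- The first step from `v` towards `a` is also a first step towards `b`, hence it is `w`. -/
lemma dist_add_one_eq_of_adj_of_adj (hG : IsGeodetic G) (hvw : G.Adj v w) (hab : G.Adj a b)
    (hva : v ≠ a) (hb : G.dist v b = G.dist v a + 1) (hw : G.dist w b + 1 = G.dist v b) :
    G.dist w a + 1 = G.dist v a := by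
  obtain ⟨z, hvz, hz⟩ := hG.1.exists_adj_dist_add_one_eq hva
  obtain rfl := hG.eq_of_adj_of_dist_add_one_eq hvz hvw (hG.1.dist_add_one_eq_of_adj hvz hz hab hb) hw
  exact hz

lemma eq_of_adj_of_adj_of_notMem (hG : IsGeodetic G) (hA : Maximal G.IsClique A) (hv : v ∉ A)
    (ha : a ∈ A) (hb : b ∈ A) (hva : G.Adj v a) (hvb : G.Adj v b) : a = b := by
  by_contra hab
  refine hv (mem_of_maximal_isClique_of_forall_adj hA fun u hu => ?_)
  rcases eq_or_ne u a with rfl | hua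
  · exact hva
  rcases eq_or_ne u b with rfl | hub
  · exact hvb
  by_contra hnadj
  exact hab <| hG.eq_of_adj_of_adj_of_not_adj hva (hA.1 ha hu hua.symm) hvb (hA.1 hb hu hub.symm)
    (ne_of_mem_of_not_mem hu hv).symm hnadj

lemma dist_le_of_dist_eq (hG : IsGeodetic G) (hA : Maximal G.IsClique A) (hv : v ∉ A)
    (ha : a ∈ A) (hb : b ∈ A) (hab : a ≠ b) (hb' : b' ∈ A) (hd : G.dist v a = G.dist v b) :
    G.dist v b' ≤ G.dist v a := by
  obtain ⟨k, hk⟩ : ∃ k, G.dist v a = k := ⟨_, rfl⟩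
  induction k generalizing v with
  | zero => exact absurd (hG.1.dist_eq_zero_iff.mp hk ▸ ha) hv
  | succ k ih =>
    by_contra! hlt
    have hab' : a ≠ b' := by rintro rfl; omega
    have hbb' : b ≠ b' := by rintro rfl; omega
    have hb'd : G.dist v b' = G.dist v a + 1 := by
      have := hG.1.dist_triangle (u := v) (v := a) (w := b')
      rw [dist_eq_one_iff_adj.mpr (hA.1 ha hb' hab')] at this
      omega
    rcases k with _ | k
    · exact hab <| hG.eq_of_adj_of_adj_of_notMem hA hv ha hb (dist_eq_one_iff_adj.mp hk)
        (dist_eq_one_iff_adj.mp (hd ▸ hk))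
    obtain ⟨y, hvy, hy⟩ := hG.1.exists_adj_dist_add_one_eq (ne_of_mem_of_not_mem ha hv).symm
    have hyb' := hG.1.dist_add_one_eq_of_adj hvy hy (hA.1 ha hb' hab') hb'd
    have hyb := hG.dist_add_one_eq_of_adj_of_adj hvy (hA.1 hb hb' hbb')
      (ne_of_mem_of_not_mem hb hv).symm (by omega) hyb'
    have hyA : y ∉ A := fun hyA => by
      have := hA.1.dist_le_one hyA hb'
      omega
    have := ih hyA (by omega) (by omega)
    omega

lemma exists_isGate [Finite V] (hG : IsGeodetic G) (hA : Maximal G.IsClique A)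
    (hAne : A.Nonempty) (hv : v ∉ A) (hvA : ¬ G.IsEquidistant A v) : ∃ g, G.IsGate A v g := by
  obtain ⟨g, hg, hmin⟩ := A.exists_min_image (G.dist v) A.toFinite hAne
  refine ⟨g, hg, fun a ha => ?_⟩
  rcases eq_or_ne a g with rfl | hag
  · simp
  have htri := hG.1.dist_triangle (u := v) (v := g) (w := a)
  rw [dist_eq_one_iff_adj.mpr (hA.1 hg ha hag.symm)] at htri ⊢
  by_contra hne
  have hd : G.dist v a = G.dist v g := by
    have := hmin a ha
    omega
  refine hvA fun a₁ ha₁ a₂ ha₂ => ?_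
  have h₁ := hG.dist_le_of_dist_eq hA hv ha hg hag ha₁ hd
  have h₂ := hG.dist_le_of_dist_eq hA hv ha hg hag ha₂ hd
  have := hmin a₁ ha₁
  have := hmin a₂ ha₂
  omega

lemma isGate_eq_of_adj (hG : IsGeodetic G) (hA : G.IsClique A) (hvw : G.Adj v w) (hv : v ∉ A)
    (hva : G.IsGate A v a) (hwb : G.IsGate A w b) : a = b := by
  by_contra hab
  have hvb := hva.dist_eq_add_one hA hwb.1 (Ne.symm hab)
  have hwa := hwb.dist_eq_add_one hA hva.1 hab
  have h₁ := hG.1.dist_triangle (u := v) (v := w) (w := b)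
  have h₂ := hG.1.dist_triangle (u := w) (v := v) (w := a)
  rw [dist_eq_one_iff_adj.mpr hvw] at h₁
  rw [dist_eq_one_iff_adj.mpr hvw.symm] at h₂
  have := hG.dist_add_one_eq_of_adj_of_adj hvw (hA hva.1 hwb.1 hab)
    (ne_of_mem_of_not_mem hva.1 hv).symm hvb (by omega)
  omega

lemma isGate_of_adj (hG : IsGeodetic G) (hA : G.IsClique A)
    (hgate : ∀ v ∉ A, ∃ g, G.IsGate A v g) (huw : G.Adj u w) (hwx : w ≠ x) (hu : u ∉ A)
    (hux : G.IsGate A u x) : w ∉ A ∧ G.IsGate A w x := by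
  have hw : w ∉ A := fun hw => by
    have hd := hux.dist_eq_add_one hA hw hwx
    have := hG.1.pos_dist_of_ne (ne_of_mem_of_not_mem hux.1 hu).symm
    rw [dist_eq_one_iff_adj.mpr huw] at hd
    omega
  obtain ⟨g, hwg⟩ := hgate w hw
  obtain rfl := hG.isGate_eq_of_adj hA huw hu hux hwg
  exact ⟨hw, hwg⟩

lemma exists_isEquidistant [Finite V] (hG : IsGeodetic G) (hA : Maximal G.IsClique A)
    (hAnt : A.Nontrivial) (htwo : ∀ x : V, (G.induce {y : V | y ≠ x}).Connected)
    (hne : G ≠ ⊤) : ∃ c ∉ A, G.IsEquidistant A c := by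
  by_contra! h
  have hgate : ∀ v ∉ A, ∃ g, G.IsGate A v g := fun v hv =>
    hG.exists_isGate hA hAnt.nonempty hv (h v hv)
  obtain ⟨x, hx⟩ : ∃ x, x ∉ A := by
    by_contra! hall
    exact hne (eq_top_iff.mpr fun u w huw => hA.1 (hall u) (hall w) huw)
  obtain ⟨g, hxg⟩ := hgate x hx
  obtain ⟨a, ha, hag⟩ := hAnt.exists_ne g
  obtain ⟨p⟩ := (htwo g).preconnected ⟨x, (ne_of_mem_of_not_mem hxg.1 hx).symm⟩ ⟨a, hag⟩
  suffices ∀ {u w : {y : V | y ≠ g}} (q : (G.induce {y : V | y ≠ g}).Walk u w),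
      (u : V) ∉ A ∧ G.IsGate A u g → (w : V) ∉ A from this p ⟨hx, hxg⟩ ha
  intro u w q
  induction q with
  | nil => exact And.left
  | @cons _ z _ huz _ ih => exact fun hu => ih (hG.isGate_of_adj hA.1 hgate huz z.2 hu.1 hu.2)

lemma exists_isNearestEquidistant [Finite V] (hG : IsGeodetic G) (hA : Maximal G.IsClique A)
    (hAnt : A.Nontrivial) (htwo : ∀ x : V, (G.induce {y : V | y ≠ x}).Connected)
    (hne : G ≠ ⊤) : ∃ c, IsNearestEquidistant G A c := by
  obtain ⟨c₀, hc₀⟩ := hG.exists_isEquidistant hA hAnt htwo hne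
  obtain ⟨a₀, ha₀⟩ := hAnt.nonempty
  obtain ⟨c, ⟨hc, hcA⟩, hmin⟩ := Set.exists_min_image {c | c ∉ A ∧ G.IsEquidistant A c}
    (G.dist · a₀) (Set.toFinite _) ⟨c₀, hc₀⟩
  refine ⟨c, hc, hcA, fun c' hc' hc'A a ha => ?_⟩
  rw [hcA a ha a₀ ha₀, hc'A a ha a₀ ha₀]
  exact hmin c' ⟨hc', hc'A⟩

end IsGeodetic

namespace SimpleGraph

variable {V : Type*} {G : SimpleGraph V} {A : Set V} {a b c x y : V}

/-- Otherwise `y` would be an equidistant vertex closer to `A` than `c`. -/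
lemma IsNearestEquidistant.dist_eq_of_ne (hc : IsNearestEquidistant G A c) (hG : IsGeodetic G)
    (hA : Maximal G.IsClique A) (ha : a ∈ A) (hb : b ∈ A) (hab : a ≠ b) (hcy : G.Adj c y)
    (hy : G.dist y a + 1 = G.dist c a) : G.dist y b = G.dist c a := by
  obtain ⟨hcA, hcEq, hmin⟩ := hc
  have hyA : y ∉ A := notMem_of_adj_of_isEquidistant hA hcA hcEq hcy
  have hlower : ∀ a' ∈ A, G.dist c a ≤ G.dist y a' + 1 := fun a' ha' => by
    have := hG.1.dist_triangle (u := c) (v := y) (w := a')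
    rw [dist_eq_one_iff_adj.mpr hcy, hcEq a' ha' a ha] at this
    omega
  have hupper := hG.1.dist_triangle (u := y) (v := a) (w := b)
  rw [dist_eq_one_iff_adj.mpr (hA.1 ha hb hab)] at hupper
  by_contra hne
  have hd : G.dist y a = G.dist y b := by
    have := hlower b hb
    omega
  have hyEq : G.IsEquidistant A y := fun a₁ ha₁ a₂ ha₂ => by
    have := hG.dist_le_of_dist_eq hA hyA ha hb hab ha₁ hd
    have := hG.dist_le_of_dist_eq hA hyA ha hb hab ha₂ hd
    have := hlower a₁ ha₁
    have := hlower a₂ ha₂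
    omega
  have := hmin y hyA hyEq a ha
  omega

lemma IsNearestEquidistant.ne_of_ne (hc : IsNearestEquidistant G A c) (hG : IsGeodetic G)
    (hA : Maximal G.IsClique A) (ha : a ∈ A) (hb : b ∈ A) (hab : a ≠ b) (hcx : G.Adj c x)
    (hx : G.dist x a + 1 = G.dist c a) (hy : G.dist y b + 1 = G.dist c b) : x ≠ y := by
  rintro rfl
  have := hc.dist_eq_of_ne hG hA ha hb hab hcx hx
  have := hc.2.1 a ha b hb
  omega

/-- Otherwise `y` would be the first step from `x` towards `b`, and hence also towards `a`,
although it is farther from `a` than `x`. -/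
lemma IsNearestEquidistant.not_adj (hc : IsNearestEquidistant G A c) (hG : IsGeodetic G)
    (hA : Maximal G.IsClique A) (ha : a ∈ A) (hb : b ∈ A) (hab : a ≠ b) (hcx : G.Adj c x)
    (hx : G.dist x a + 1 = G.dist c a) (hcy : G.Adj c y) (hy : G.dist y b + 1 = G.dist c b) :
    ¬ G.Adj x y := by
  intro hxy
  have hxb := hc.dist_eq_of_ne hG hA ha hb hab hcx hx
  have hya := hc.dist_eq_of_ne hG hA hb ha hab.symm hcy hy
  have hcab := hc.2.1 a ha b hb
  have hxA : x ∉ A := notMem_of_adj_of_isEquidistant hA hc.1 hc.2.1 hcx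
  have := hG.dist_add_one_eq_of_adj_of_adj hxy (hA.1 ha hb hab)
    (ne_of_mem_of_not_mem ha hxA).symm (by omega) (by omega)
  omega

end SimpleGraph

theorem stmt_3_general {V : Type*} [Fintype V] (G : SimpleGraph V) (hG : IsGeodetic G)
    (htwo : ∀ x : V, (G.induce {y : V | y ≠ x}).Connected)
    (hnotcomplete : G ≠ ⊤)
    (m : ℕ) (hm : 1 < m) (s : Finset V) (hs : s.card = m) (hclique : G.IsClique s) :
    Nonempty (completeBipartiteGraph (Fin 1) (Fin m) ↪g G) := by
  obtain ⟨A, hsA, hA⟩ := Finite.exists_le_maximal (p := G.IsClique) hclique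
  have hAnt : A.Nontrivial := by
    obtain ⟨a, ha, b, hb, hab⟩ := Finset.one_lt_card.mp (hs ▸ hm)
    exact ⟨a, hsA ha, b, hsA hb, hab⟩
  obtain ⟨c, hc⟩ := hG.exists_isNearestEquidistant hA hAnt htwo hnotcomplete
  choose! y hcy hy using fun a (ha : a ∈ A) =>
    hG.1.exists_adj_dist_add_one_eq (ne_of_mem_of_not_mem ha hc.1).symm
  let e : Fin m → V := fun i => (s.equivFinOfCardEq hs).symm i
  have he : Function.Injective e := Subtype.coe_injective.comp (Equiv.injective _)
  have heA : ∀ i, e i ∈ A := fun i => hsA (Subtype.prop _)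
  refine nonempty_completeBipartiteGraph_embedding (y ∘ e) (fun i j hij => ?_)
    (fun i => hcy _ (heA i)) (fun i j => ?_)
  · by_contra hne
    exact hc.ne_of_ne hG hA (heA i) (heA j) (he.ne hne) (hcy _ (heA i)) (hy _ (heA i))
      (hy _ (heA j)) hij
  · rcases eq_or_ne i j with rfl | hne
    · exact G.irrefl
    · exact hc.not_adj hG hA (heA i) (heA j) (he.ne hne) (hcy _ (heA i)) (hy _ (heA i))
        (hcy _ (heA j)) (hy _ (heA j))

/-- Let `G` be a finite geodetic two-connected graph on at least 3 vertices which is not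
complete and contains a clique on `m > 1` vertices.  Then `G` contains the star `K_{1,m}`
as an induced subgraph. -/
theorem stmt_3 {V : Type*} [Fintype V] (G : SimpleGraph V) (hG : IsGeodetic G)
    (hcard : 3 ≤ Fintype.card V)
    (htwo : ∀ x : V, (G.induce {y : V | y ≠ x}).Connected)
    (hnotcomplete : G ≠ ⊤)
    (m : ℕ) (hm : 1 < m) (s : Finset V) (hs : s.card = m) (hclique : G.IsClique s) :
    Nonempty (completeBipartiteGraph (Fin 1) (Fin m) ↪g G) :=
  stmt_3_general G hG htwo hnotcomplete m hm s hs hclique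
end

section
/- Let G be a finite geodetic graph that is locally connected, i.e. for every vertex v of G the subgraph induced by the open neighborhood of v is nonempty and connected. Then G is a complete graph. -/
open SimpleGraph

/-!
Call `x - a - b` an induced path if `x ~ a ~ b`, `x ≠ b` and `x ≁ b`. A connected graph without
induced paths is complete, since the first three vertices of a shortest walk between two distinct
non-adjacent vertices form one. In a geodetic graph the middle vertex of an induced path `x - w - y`
is the unique common neighbour of `x` and `y`. If moreover the neighbourhood of `w` is connected,
walk inside it from `x` to `y`: at the first step `a ~ b` leaving `{x} ∪ N(x)`, either `a = x`
(impossible) or `x - a - b` is an induced path, so `a` is a common neighbour of `x` and `b`,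
as is `w`; hence `a = w`, contradicting `a ∈ N(w)`.
-/

namespace SimpleGraph

variable {V : Type*} {G : SimpleGraph V}

theorem Connected.eq_top_of_forall_adj_of_adj_of_adj (hconn : G.Connected)
    (h : ∀ ⦃x a b : V⦄, G.Adj x a → G.Adj a b → x ≠ b → G.Adj x b) : G = ⊤ := by
  ext u v
  refine ⟨Adj.ne, fun hne => ?_⟩
  by_contra hnadj
  have hdist := hconn.one_lt_dist_of_ne_of_not_adj hne hnadj
  obtain ⟨p, hp⟩ := hconn.exists_walk_length_eq_dist u v
  obtain ⟨x, a, b, hxa, hab, hxb, hne'⟩ := p.exists_adj_adj_not_adj_ne hp hdist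
  exact hxb (h hxa hab hne')

end SimpleGraph

namespace IsGeodetic

variable {V : Type*} {G : SimpleGraph V}

theorem eq_of_adj_of_adj (hG : IsGeodetic G) {x y a b : V} (hne : x ≠ y) (hnadj : ¬G.Adj x y)
    (hxa : G.Adj x a) (hay : G.Adj a y) (hxb : G.Adj x b) (hby : G.Adj b y) : a = b := by
  have hdist : G.dist x y = 2 :=
    le_antisymm (dist_le (.cons hxa (.cons hay .nil)))
      (hG.1.one_lt_dist_of_ne_of_not_adj hne hnadj)
  have geodesic : ∀ ⦃c⦄ (hxc : G.Adj x c) (hcy : G.Adj c y),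
      (Walk.cons hxc (.cons hcy .nil)).IsPath ∧ (Walk.cons hxc (.cons hcy .nil)).length =
        G.dist x y := fun c hxc hcy =>
    ⟨by simp [Walk.isPath_def, hxc.ne, hcy.ne, hne], by simp [hdist]⟩
  have hwalk := (hG.2 x y).unique (geodesic hxa hay) (geodesic hxb hby)
  simpa using congrArg Walk.support hwalk

theorem adj_of_adj_of_adj (hG : IsGeodetic G)
    (hloc : ∀ v : V, (G.induce (G.neighborSet v)).Connected) {x w y : V}
    (hxw : G.Adj x w) (hwy : G.Adj w y) (hne : x ≠ y) : G.Adj x y := by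
  by_contra hnadj
  obtain ⟨q⟩ := (hloc w).preconnected ⟨x, hxw.symm⟩ ⟨y, hwy⟩
  obtain ⟨d, -, ha, hb⟩ :=
    q.exists_boundary_dart {v | v.1 = x ∨ G.Adj x v.1} (Or.inl rfl) (by simp [hne.symm, hnadj])
  obtain ⟨⟨⟨a, hwa⟩, ⟨b, hwb⟩⟩, hab⟩ := d
  simp only [Set.mem_ofPred_eq, not_or] at ha hb
  obtain rfl | hxa := ha
  · exact hb.2 hab
  · have haw : a = w := hG.eq_of_adj_of_adj (Ne.symm hb.1) hb.2 hxa hab hxw hwb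
    exact G.irrefl (haw ▸ hwa)

end IsGeodetic

theorem stmt_7_general {V : Type*} (G : SimpleGraph V) (hG : IsGeodetic G)
    (hloc : ∀ v : V, (G.induce (G.neighborSet v)).Connected) :
    G = ⊤ :=
  hG.1.eq_top_of_forall_adj_of_adj_of_adj fun _ _ _ hxa hab hne =>
    hG.adj_of_adj_of_adj hloc hxa hab hne

/-- A finite geodetic locally connected graph (the subgraph induced by the open neighborhood
of every vertex is nonempty and connected) is complete. -/
theorem stmt_7 {V : Type*} [Fintype V] (G : SimpleGraph V) (hG : IsGeodetic G)
    (hloc : ∀ v : V, (G.induce (G.neighborSet v)).Connected) :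
    G = ⊤ :=
  stmt_7_general G hG hloc
end

section
/- Let G be a finite geodetic graph that is fully cycle extendable, i.e. every vertex of G lies on a cycle of length 3 and every non-Hamiltonian cycle of G is extendable. Then G is a complete graph. -/
open SimpleGraph

/-- A cycle `c` of `G` is *extendable* if there is a cycle of `G` whose vertex set consists
of all the vertices of `c` together with exactly one additional vertex. -/
def CycleExtendable {V : Type*} (G : SimpleGraph V) {v : V} (c : G.Walk v v) : Prop :=
  ∃ (w : V) (c' : G.Walk w w), c'.IsCycle ∧
    ∃ x : V, x ∉ c.support ∧ {y : V | y ∈ c'.support} = insert x {y : V | y ∈ c.support}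

/-!
Start from a triangle and extend it one vertex at a time. If the vertices of a cycle form a
clique and the cycle extends by a vertex `x`, then `x` has two distinct neighbours `a`, `b` on
the new cycle, both in the clique. Any other clique vertex `z` is then a common neighbour of
`a` and `b`, so if `x` and `z` were not adjacent, `x - a - z` and `x - b - z` would be two
geodesics. Hence the vertices still form a clique, and once the cycle is Hamiltonian, `G` is
complete.
-/

namespace SimpleGraph

variable {V : Type*} {G : SimpleGraph V}

lemma Walk.isClique_support_of_length_eq_three {v : V} (c : G.Walk v v) (h : c.length = 3) :
    G.IsClique {y | y ∈ c.support} := by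
  match c, h with
  | .cons hva (.cons hab (.cons hbv .nil)), _ =>
    intro x hx y hy hxy
    simp only [Walk.support_cons, Walk.support_nil, List.mem_cons, List.not_mem_nil, or_false,
      Set.mem_ofPred_eq] at hx hy
    rcases hx with rfl | rfl | rfl | rfl <;> rcases hy with rfl | rfl | rfl | rfl <;>
      first | exact absurd rfl hxy | assumption | exact G.adj_symm ‹_›

lemma Walk.IsCycle.exists_adj_adj_ne {v x : V} {c : G.Walk v v} (hc : c.IsCycle)
    (hx : x ∈ c.support) :
    ∃ a b, a ≠ b ∧ G.Adj x a ∧ G.Adj x b ∧ a ∈ c.support ∧ b ∈ c.support := by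
  classical
  set c' := c.rotate x hx
  have hc' : c'.IsCycle := hc.rotate hx
  exact ⟨c'.snd, c'.penultimate, hc'.snd_ne_penultimate, c'.adj_snd hc'.not_nil,
    (c'.adj_penultimate hc'.not_nil).symm,
    (Walk.mem_support_rotate_iff c x hx).1 (c'.getVert_mem_support 1),
    (Walk.mem_support_rotate_iff c x hx).1 (c'.getVert_mem_support _)⟩

end SimpleGraph

namespace IsGeodetic

variable {V : Type*} {G : SimpleGraph V}

lemma adj_of_two_common_neighbors {x z a b : V} (hG : IsGeodetic G) (hxz : x ≠ z) (hab : a ≠ b)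
    (hxa : G.Adj x a) (haz : G.Adj a z) (hxb : G.Adj x b) (hbz : G.Adj b z) : G.Adj x z := by
  by_contra hnxz
  let pa : G.Walk x z := .cons hxa (.cons haz .nil)
  let pb : G.Walk x z := .cons hxb (.cons hbz .nil)
  have hdist : G.dist x z = 2 := by
    have hle : G.dist x z ≤ 2 := G.dist_le pa
    have hne0 : G.dist x z ≠ 0 := (pa.reachable.dist_eq_zero_iff).not.2 hxz
    have hne1 : G.dist x z ≠ 1 := mt dist_eq_one_iff_adj.1 hnxz
    omega
  have hgeod {y : V} (hxy : G.Adj x y) (hyz : G.Adj y z) :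
      (Walk.cons hxy (.cons hyz .nil)).IsPath ∧
        (Walk.cons hxy (.cons hyz .nil)).length = G.dist x z := by
    simp [Walk.isPath_def, hdist, hxz, hxy.ne, hyz.ne]
  have hpab : pa = pb := (hG.2 x z).unique (hgeod hxa haz) (hgeod hxb hbz)
  simp [pa, pb, hab] at hpab

lemma isClique_insert_of_isCycle {S : Set V} {v x : V} {c : G.Walk v v}
    (hG : IsGeodetic G) (hS : G.IsClique S) (hc : c.IsCycle)
    (hsupp : {y | y ∈ c.support} = insert x S) : G.IsClique (insert x S) := by
  have mem_iff {y : V} : y ∈ c.support ↔ y = x ∨ y ∈ S := Set.ext_iff.1 hsupp y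
  obtain ⟨a, b, hab, hxa, hxb, ha, hb⟩ := hc.exists_adj_adj_ne (mem_iff.2 (.inl rfl))
  have haS : a ∈ S := (mem_iff.1 ha).resolve_left hxa.ne'
  have hbS : b ∈ S := (mem_iff.1 hb).resolve_left hxb.ne'
  refine isClique_insert.2 ⟨hS, fun z hz hxz => ?_⟩
  by_cases hza : z = a
  · exact hza ▸ hxa
  by_cases hzb : z = b
  · exact hzb ▸ hxb
  exact hG.adj_of_two_common_neighbors hxz hab hxa (hS haS hz (Ne.symm hza)) hxb (hS hbS hz (Ne.symm hzb))

theorem eq_top_of_isClique_support [Finite V] (hG : IsGeodetic G)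
    (hext : ∀ (v : V) (c : G.Walk v v), c.IsCycle → ¬(∀ w : V, w ∈ c.support) →
      CycleExtendable G c)
    {v : V} (c : G.Walk v v) (hc : c.IsCycle) (hcl : G.IsClique {y | y ∈ c.support}) :
    G = ⊤ := by
  by_cases hham : ∀ w, w ∈ c.support
  · exact isClique_univ.1 (Set.eq_univ_of_forall hham ▸ hcl)
  obtain ⟨w, c', hc', x, hx, hsupp⟩ := hext v c hc hham
  exact eq_top_of_isClique_support hG hext c' hc'
    (hsupp ▸ hG.isClique_insert_of_isCycle hcl hc' hsupp)
termination_by ({y | y ∈ c.support}ᶜ : Set V).ncard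
decreasing_by
  rw [hsupp]
  exact Set.ncard_lt_ncard (compl_lt_compl_iff_lt.2 (Set.ssubset_insert hx))

end IsGeodetic

/-- A finite geodetic fully cycle extendable graph (every vertex lies on a triangle and
every non-Hamiltonian cycle is extendable) is complete. -/
theorem stmt_8 {V : Type*} [Fintype V] (G : SimpleGraph V) (hG : IsGeodetic G)
    (htri : ∀ v : V, ∃ c : G.Walk v v, c.IsCycle ∧ c.length = 3)
    (hext : ∀ (v : V) (c : G.Walk v v), c.IsCycle → ¬(∀ w : V, w ∈ c.support) →
      CycleExtendable G c) :
    G = ⊤ := by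
  rcases isEmpty_or_nonempty V with hV | ⟨⟨v⟩⟩
  · ext a
    exact isEmptyElim a
  obtain ⟨c, hc, hlen⟩ := htri v
  exact hG.eq_top_of_isClique_support hext c hc (c.isClique_support_of_length_eq_three hlen)
end

section
/- For every finite simple graph H there exists a finite antipodal graph G that contains H as an induced subgraph (i.e. there is a graph embedding of H into G). -/
/-!
Double a graph `B` on `Y`: take two copies of `B` and join `x` in one copy to `y` in the other
whenever `x ≠ y` are non-adjacent in `B`. The two copies of a vertex are at distance at least 3,
since a common neighbour would be adjacent to the same vertex of `B` both in `B` and in its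
complement. If any two vertices of `B` have a common neighbour in the complement, and every edge
`xy` of `B` has an endpoint with a neighbour outside the closed neighbourhood of the other, then
all remaining pairs are at distance at most 2, so the unique antipode of a vertex is its copy.
Hanging two pendant vertices on every vertex of `H` and adding three isolated vertices produces
such a `B`, and `H` is an induced subgraph of it.
-/

open SimpleGraph

/-- `v` is an *antipode* of `u` if `v` is at maximum distance from `u`. -/
def IsAntipode {V : Type*} (G : SimpleGraph V) (u v : V) : Prop :=
  ∀ w : V, G.dist u w ≤ G.dist u v

/-- A connected graph is *antipodal* if every vertex has exactly one antipode. -/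
def IsAntipodal {V : Type*} (G : SimpleGraph V) : Prop :=
  G.Connected ∧ ∀ u : V, ∃! v : V, IsAntipode G u v

lemma existsUnique_isAntipode {V : Type*} {G : SimpleGraph V} {u v : V} {n : ℕ}
    (h : ∀ w, n ≤ G.dist u w ↔ w = v) : ∃! v, IsAntipode G u v := by
  refine ⟨v, fun w => ?_, fun w hw => (h w).1 ((h v).2 rfl |>.trans (hw v))⟩
  by_cases hw : n ≤ G.dist u w
  · rw [(h w).1 hw]
  · exact (not_le.1 hw).le.trans ((h v).2 rfl)

namespace SimpleGraph

variable {Y : Type*}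

def HasCommonNonNeighbors (B : SimpleGraph Y) : Prop :=
  ∀ x y, ∃ z, Bᶜ.Adj x z ∧ Bᶜ.Adj z y

def HasPrivateNeighbors (B : SimpleGraph Y) : Prop :=
  ∀ ⦃x y⦄, B.Adj x y → ∃ z, (B.Adj x z ∧ Bᶜ.Adj z y) ∨ (Bᶜ.Adj x z ∧ B.Adj z y)

def antipodalDouble (B : SimpleGraph Y) : SimpleGraph (Y × Bool) where
  Adj p q := if p.2 = q.2 then B.Adj p.1 q.1 else Bᶜ.Adj p.1 q.1
  symm := ⟨fun p q h => by
    by_cases hpq : p.2 = q.2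
    · simp only [hpq, if_true] at h ⊢
      exact h.symm
    · simp only [hpq, Ne.symm hpq, if_false] at h ⊢
      exact h.symm⟩
  loopless := ⟨fun p => by simp⟩

def Embedding.antipodalDouble (B : SimpleGraph Y) : B ↪g B.antipodalDouble :=
  ⟨⟨fun x => (x, false), fun _ _ h => congrArg Prod.fst h⟩, Iff.rfl⟩

variable {B : SimpleGraph Y}

namespace antipodalDouble

lemma adj_mk_same {x y : Y} {i : Bool} : B.antipodalDouble.Adj (x, i) (y, i) ↔ B.Adj x y := by
  simp [antipodalDouble]

lemma adj_mk_of_ne {x y : Y} {i j : Bool} (hij : i ≠ j) :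
    B.antipodalDouble.Adj (x, i) (y, j) ↔ Bᶜ.Adj x y := by
  simp [antipodalDouble, hij]

lemma commonNeighbors_mk_not (x : Y) (i : Bool) :
    B.antipodalDouble.commonNeighbors (x, i) (x, !i) = ∅ := by
  refine Set.eq_empty_iff_forall_notMem.2 fun ⟨y, j⟩ hy => ?_
  rw [mem_commonNeighbors] at hy
  cases i <;> cases j <;> simp [antipodalDouble] at hy <;> tauto

lemma two_lt_dist_mk_not {x : Y} {i : Bool}
    (hr : B.antipodalDouble.Reachable (x, i) (x, !i)) :
    2 < B.antipodalDouble.dist (x, i) (x, !i) := by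
  have h : 2 < B.antipodalDouble.edist (x, i) (x, !i) :=
    two_lt_edist_iff.2 ⟨by simp, by simp [antipodalDouble], commonNeighbors_mk_not x i⟩
  rw [← hr.coe_dist_eq_edist] at h
  exact_mod_cast h

lemma exists_walk_length_le_two (hcompl : B.HasCommonNonNeighbors)
    (hpriv : B.HasPrivateNeighbors) {p q : Y × Bool} (hpq : p.1 ≠ q.1) :
    ∃ w : B.antipodalDouble.Walk p q, w.length ≤ 2 := by
  obtain ⟨x, i⟩ := p
  obtain ⟨y, j⟩ := q
  have path2 : ∀ r, B.antipodalDouble.Adj (x, i) r → B.antipodalDouble.Adj r (y, j) →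
      ∃ w : B.antipodalDouble.Walk (x, i) (y, j), w.length ≤ 2 :=
    fun r h₁ h₂ => ⟨.cons h₁ (.cons h₂ .nil), le_rfl⟩
  by_cases hij : i = j
  · subst hij
    by_cases hxy : B.Adj x y
    · exact ⟨(adj_mk_same.2 hxy).toWalk, by simp⟩
    obtain ⟨z, hxz, hzy⟩ := hcompl x y
    exact path2 (z, !i) ((adj_mk_of_ne (by simp)).2 hxz) ((adj_mk_of_ne (by simp)).2 hzy)
  · by_cases hxy : B.Adj x y
    · obtain ⟨z, ⟨hxz, hzy⟩ | ⟨hxz, hzy⟩⟩ := hpriv hxy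
      · exact path2 (z, i) (adj_mk_same.2 hxz) ((adj_mk_of_ne hij).2 hzy)
      · exact path2 (z, j) ((adj_mk_of_ne hij).2 hxz) (adj_mk_same.2 hzy)
    · exact ⟨((adj_mk_of_ne hij).2 ((compl_adj B x y).2 ⟨hpq, hxy⟩)).toWalk, by simp⟩

end antipodalDouble

open antipodalDouble

lemma connected_antipodalDouble [Nonempty Y] (hcompl : B.HasCommonNonNeighbors)
    (hpriv : B.HasPrivateNeighbors) : B.antipodalDouble.Connected := by
  refine (connected_iff _).2 ⟨fun p q => ?_, inferInstance⟩
  obtain ⟨z, hpz, hzq⟩ := hcompl p.1 q.1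
  obtain ⟨w₁, -⟩ := exists_walk_length_le_two hcompl hpriv (q := (z, false)) hpz.ne
  obtain ⟨w₂, -⟩ := exists_walk_length_le_two hcompl hpriv (p := (z, false)) (q := q) hzq.ne
  exact (w₁.append w₂).reachable

theorem isAntipodal_antipodalDouble [Nonempty Y] (hcompl : B.HasCommonNonNeighbors)
    (hpriv : B.HasPrivateNeighbors) : IsAntipodal B.antipodalDouble := by
  have hconn := connected_antipodalDouble hcompl hpriv
  refine ⟨hconn, fun ⟨x, i⟩ =>
    existsUnique_isAntipode (v := (x, !i)) (n := 3) fun ⟨y, j⟩ => ⟨fun h => ?_, ?_⟩⟩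
  · by_cases hxy : x = y
    · subst hxy
      by_cases hij : j = i
      · simp [hij] at h
      · simp [Bool.eq_not.2 hij]
    · obtain ⟨w, hw⟩ := exists_walk_length_le_two hcompl hpriv (p := (x, i)) (q := (y, j)) hxy
      have := (dist_le w).trans hw
      omega
  · rintro ⟨⟩
    exact two_lt_dist_mk_not (hconn _ _)

section Pendants

variable {W : Type*} (H : SimpleGraph W) (ι : Type*)

def withPendants : SimpleGraph (W ⊕ W × ι) where
  Adj
    | .inl a, .inl b => H.Adj a b
    | .inl a, .inr (b, _) => a = b
    | .inr (a, _), .inl b => a = b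
    | .inr _, .inr _ => False
  symm := ⟨by rintro (a | ⟨a, k⟩) (b | ⟨b, l⟩) h <;> simp_all [H.adj_comm]⟩
  loopless := ⟨by rintro (a | ⟨a, k⟩) h <;> simp_all⟩

lemma hasPrivateNeighbors_withPendants [Nontrivial ι] :
    (H.withPendants ι).HasPrivateNeighbors := by
  rintro (a | ⟨a, k⟩) (b | ⟨b, l⟩) h
  · obtain ⟨k⟩ : Nonempty ι := inferInstance
    exact ⟨.inr (a, k), .inl ⟨rfl, by simpa [withPendants] using H.ne_of_adj h⟩⟩
  · obtain rfl : a = b := h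
    obtain ⟨k, hk⟩ := exists_ne l
    exact ⟨.inr (a, k), .inl ⟨rfl, by simp [withPendants, hk]⟩⟩
  · obtain ⟨l, hl⟩ := exists_ne k
    exact ⟨.inr (a, l), .inr ⟨by simp [withPendants, hl.symm], h⟩⟩
  · exact h.elim

def Embedding.withPendants : H ↪g H.withPendants ι :=
  ⟨.inl, Iff.rfl⟩

end Pendants

lemma HasPrivateNeighbors.sum_bot {V ι : Type*} {G : SimpleGraph V} (hG : G.HasPrivateNeighbors) :
    (G ⊕g (⊥ : SimpleGraph ι)).HasPrivateNeighbors := by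
  rintro (a | a) (b | b) h
  · obtain ⟨z, ⟨hz₁, hz₂⟩ | ⟨hz₁, hz₂⟩⟩ := hG (sum_adj_inl.1 h)
    · exact ⟨.inl z, .inl ⟨sum_adj_inl.2 hz₁, by simpa [compl_adj] using hz₂⟩⟩
    · exact ⟨.inl z, .inr ⟨by simpa [compl_adj] using hz₁, sum_adj_inl.2 hz₂⟩⟩
  all_goals simp at h

lemma hasCommonNonNeighbors_sum_bot_fin_three {V : Type*} (G : SimpleGraph V) :
    (G ⊕g (⊥ : SimpleGraph (Fin 3))).HasCommonNonNeighbors := by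
  intro x y
  have key : ∀ a b : Fin 3, ∃ k, k ≠ a ∧ k ≠ b := by decide
  obtain ⟨k, hx, hy⟩ := key (x.elim (fun _ => 0) id) (y.elim (fun _ => 0) id)
  refine ⟨.inr k, ?_, ?_⟩
  · cases x <;> simp_all [compl_adj, eq_comm]
  · cases y <;> simp_all [compl_adj]

end SimpleGraph

/-- Every finite graph `H` is an induced subgraph of some finite antipodal graph. -/
theorem stmt_14 {W : Type} [Fintype W] (H : SimpleGraph W) :
    ∃ (V : Type) (_ : Fintype V) (G : SimpleGraph V),
      IsAntipodal G ∧ Nonempty (H ↪g G) := by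
  let B := H.withPendants Bool ⊕g (⊥ : SimpleGraph (Fin 3))
  refine ⟨_, inferInstance, B.antipodalDouble, ?_, ⟨?_⟩⟩
  · exact isAntipodal_antipodalDouble (hasCommonNonNeighbors_sum_bot_fin_three _)
      (hasPrivateNeighbors_withPendants H Bool).sum_bot
  · exact (Embedding.antipodalDouble B).comp
      (Embedding.sumInl.comp (Embedding.withPendants H Bool))
end

section
/- A finite connected simple graph G has the property that every connected induced subgraph of G is antipodal if and only if G has at most two vertices. (Equivalently, the maximal hereditary subclass of the class of antipodal graphs consists exactly of the one-vertex path P_1 and the two-vertex path P_2.) -/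
open SimpleGraph

/-- In a type of cardinality at most two, among any three elements two are equal. -/
lemma aux_two_of_three {V : Type*} [Fintype V] (hcard : Fintype.card V ≤ 2) :
    ∀ a b c : V, a = b ∨ a = c ∨ b = c := by
  classical
  intro a b c
  by_contra h
  push_neg at h
  obtain ⟨h1, h2, h3⟩ := h
  have hle : ({a, b, c} : Finset V).card ≤ Fintype.card V := Finset.card_le_univ _
  have hcard3 : ({a, b, c} : Finset V).card = 3 := by
    rw [Finset.card_insert_of_notMem (by simp [h1, h2]),
      Finset.card_insert_of_notMem (by simp [h3]), Finset.card_singleton]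
  omega

/-- If two distinct vertices are reachable, either they are adjacent or somewhere
there is a vertex with two distinct neighbors. -/
lemma aux_adj_or_cherry {V : Type*} (G : SimpleGraph V) {u v : V}
    (h : G.Reachable u v) (hne : u ≠ v) :
    G.Adj u v ∨ ∃ y x z : V, x ≠ z ∧ G.Adj y x ∧ G.Adj y z := by
  classical
  obtain ⟨w⟩ := h
  obtain ⟨p, hp⟩ := w.toPath
  match p, hp with
  | .nil, _ => exact absurd rfl hne
  | .cons h .nil, _ => exact Or.inl h
  | @SimpleGraph.Walk.cons _ _ _ b _ h₁ (@SimpleGraph.Walk.cons _ _ _ c _ h₂ q), hp =>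
    refine Or.inr ⟨b, u, c, ?_, h₁.symm, h₂⟩
    intro hEq
    have hnd := hp.support_nodup
    simp only [SimpleGraph.Walk.support_cons, List.nodup_cons] at hnd
    exact hnd.1 (by subst hEq; simp [SimpleGraph.Walk.start_mem_support])

/-- A finite connected graph `G` has the property that all of its connected induced
subgraphs are antipodal if and only if `G` has at most two vertices. -/
theorem stmt_15 {V : Type*} [Fintype V] (G : SimpleGraph V) (hconn : G.Connected) :
    (∀ s : Set V, (G.induce s).Connected → IsAntipodal (G.induce s)) ↔
      Fintype.card V ≤ 2 := by
  constructor
  · -- forward direction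
    intro hall
    by_contra hcard
    push_neg at hcard
    -- get three distinct vertices
    have h3 : 3 ≤ Fintype.card V := hcard
    -- get a vertex with two distinct neighbors
    have hcherry : ∃ y x z : V, x ≠ z ∧ G.Adj y x ∧ G.Adj y z := by
      classical
      have h3' : 3 ≤ (Finset.univ : Finset V).card := by
        rwa [Finset.card_univ]
      obtain ⟨t, -, ht⟩ := Finset.exists_subset_card_eq h3'
      obtain ⟨a, b, c, hab, hac, hbc, rfl⟩ := Finset.card_eq_three.mp ht
      rcases aux_adj_or_cherry G (hconn a b) hab with hadj | hch
      · rcases aux_adj_or_cherry G (hconn a c) hac with hadj' | hch'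
        · exact ⟨a, b, c, hbc, hadj, hadj'⟩
        · exact hch'
      · exact hch
    obtain ⟨y, x, z, hxz, hyx, hyz⟩ := hcherry
    set s : Set V := {x, y, z} with hs
    have hx : x ∈ s := by simp [hs]
    have hy : y ∈ s := by simp [hs]
    have hz : z ∈ s := by simp [hs]
    set H := G.induce s with hH
    have hHyx : H.Adj ⟨y, hy⟩ ⟨x, hx⟩ := hyx
    have hHyz : H.Adj ⟨y, hy⟩ ⟨z, hz⟩ := hyz
    have hreach : ∀ u : s, H.Reachable u ⟨y, hy⟩ := by
      rintro ⟨u, hu⟩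
      rcases hu with h | h | h
      · subst h; exact (H.adj_symm hHyx : H.Adj ⟨u, _⟩ _).reachable
      · subst h; exact Reachable.refl _
      · subst h; exact (H.adj_symm hHyz : H.Adj ⟨u, _⟩ _).reachable
    have hHconn : H.Connected := by
      haveI : Nonempty s := ⟨⟨y, hy⟩⟩
      exact SimpleGraph.Connected.mk (fun a b => (hreach a).trans (hreach b).symm)
    obtain ⟨v, -, huniq⟩ := (hall s hHconn).2 ⟨y, hy⟩
    have hdist1 : ∀ w : s, H.dist ⟨y, hy⟩ w ≤ 1 := by
      rintro ⟨w, hw⟩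
      rcases hw with h | h | h
      · subst h
        exact le_of_eq (SimpleGraph.dist_eq_one_iff_adj.mpr hHyx)
      · subst h
        simp [SimpleGraph.dist_self]
      · subst h
        exact le_of_eq (SimpleGraph.dist_eq_one_iff_adj.mpr hHyz)
    have hax : IsAntipode H ⟨y, hy⟩ ⟨x, hx⟩ := by
      intro w
      rw [SimpleGraph.dist_eq_one_iff_adj.mpr hHyx]
      exact hdist1 w
    have haz : IsAntipode H ⟨y, hy⟩ ⟨z, hz⟩ := by
      intro w
      rw [SimpleGraph.dist_eq_one_iff_adj.mpr hHyz]
      exact hdist1 w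
    have : (⟨x, hx⟩ : s) = ⟨z, hz⟩ := (huniq _ hax).trans (huniq _ haz).symm
    exact hxz (Subtype.ext_iff.mp this)
  · -- backward direction
    intro hcard s hsconn
    refine ⟨hsconn, fun u => ?_⟩
    haveI : Finite s := Subtype.finite
    haveI : Nonempty s := hsconn.nonempty
    obtain ⟨v, hv⟩ := Finite.exists_max (fun w => (G.induce s).dist u w)
    refine ⟨v, hv, fun v' hv' => ?_⟩
    rcases aux_two_of_three hcard v'.1 v.1 u.1 with h | h | h
    · exact Subtype.ext h
    · -- v' = u
      have hv'u : v' = u := Subtype.ext h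
      have hvz : (G.induce s).dist u v = 0 := by
        have := hv' v
        rw [hv'u, SimpleGraph.dist_self] at this
        omega
      have : v = u := ((hsconn u v).dist_eq_zero_iff.mp hvz).symm
      rw [hv'u, this]
    · -- v = u
      have hvu : v = u := Subtype.ext h
      have hvz : (G.induce s).dist u v' = 0 := by
        have := hv v'
        rw [hvu, SimpleGraph.dist_self] at this
        omega
      have : v' = u := ((hsconn u v').dist_eq_zero_iff.mp hvz).symm
      rw [hvu, this]
end

section
/- Let G be a finite geodetic graph in which every vertex has degree at least two. Then every vertex of G has at least two antipodes, i.e. for every vertex u there are at least two distinct vertices attaining the maximum distance from u. -/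
open SimpleGraph

/-- In a finite geodetic graph all of whose vertices have degree at least two,
every vertex has at least two antipodes. -/
theorem stmt_16 {V : Type*} [Fintype V] (G : SimpleGraph V) (hG : IsGeodetic G)
    (hdeg : ∀ v : V, 2 ≤ (G.neighborSet v).ncard) :
    ∀ u : V, ∃ v w : V, v ≠ w ∧ IsAntipode G u v ∧ IsAntipode G u w := by
  classical
  obtain ⟨hconn, huniq⟩ := hG
  intro u
  by_contra hcon
  push_neg at hcon
  have : Nonempty V := ⟨u⟩
  obtain ⟨v, hv⟩ := Finite.exists_max (G.dist u)
  have hvant : IsAntipode G u v := hv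
  set e := G.dist u v with he
  -- e is positive
  have hepos : 0 < e := by
    rcases e.eq_zero_or_pos with h | h
    swap
    · exact h
    · exfalso
      obtain ⟨x, y, hx, hy, hxy⟩ :=
        (Set.one_lt_ncard_iff (G.neighborSet u).toFinite).mp (lt_of_lt_of_le one_lt_two (hdeg u))
      have hadjux : G.Adj u x := hx
      have : G.dist u x = 1 := (G.dist_eq_one_iff_adj).mpr hadjux
      have := hv x
      omega
  -- two distinct neighbors of v
  obtain ⟨x, y, hx, hy, hxy⟩ :=
    (Set.one_lt_ncard_iff (G.neighborSet v).toFinite).mp (lt_of_lt_of_le one_lt_two (hdeg v))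
  have hvx : G.Adj v x := hx
  have hvy : G.Adj v y := hy
  -- every antipode of u equals v
  have hunique_ant : ∀ w : V, IsAntipode G u w → w = v := by
    intro w hw
    by_contra hne
    exact (hcon v w (fun h => hne h.symm)) hvant hw
  -- distances to neighbors of v
  have hdistnb : ∀ z : V, G.Adj v z → G.dist u z = e - 1 := by
    intro z hz
    have hle : G.dist u z ≤ e := hv z
    have hne : G.dist u z ≠ e := by
      intro hzeq
      have : IsAntipode G u z := fun w => by rw [hzeq]; exact hv w
      have hzv := hunique_ant z this
      subst hzv
      exact G.irrefl hz
    have htri : e ≤ G.dist u z + 1 := by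
      have h1 : G.dist z v = 1 := (G.dist_eq_one_iff_adj).mpr hz.symm
      calc e = G.dist u v := he
        _ ≤ G.dist u z + G.dist z v := hconn.dist_triangle
        _ = G.dist u z + 1 := by rw [h1]
    omega
  have hdx : G.dist u x = e - 1 := hdistnb x hvx
  have hdy : G.dist u y = e - 1 := hdistnb y hvy
  -- shortest paths to x and y
  obtain ⟨px, hpx, hpxl⟩ := hconn.exists_path_of_dist u x
  obtain ⟨py, hpy, hpyl⟩ := hconn.exists_path_of_dist u y
  have hvnot : ∀ (z : V) (hz : G.Adj v z) (p : G.Walk u z),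
      p.IsPath → p.length = e - 1 → v ∉ p.support := by
    intro z hz p hp hpl hmem
    have h1 : G.dist u v ≤ (p.takeUntil v hmem).length := G.dist_le _
    have h2 : (p.takeUntil v hmem).length ≤ p.length := p.length_takeUntil_le hmem
    omega
  have hvnx : v ∉ px.support := hvnot x hvx px hpx (by omega)
  have hvny : v ∉ py.support := hvnot y hvy py hpy (by omega)
  -- build two geodesics from u to v
  have mkP : ∀ (z : V) (hz : G.Adj v z) (p : G.Walk u z), p.IsPath → p.length = e - 1 →
      v ∉ p.support → ((Walk.cons hz p.reverse).reverse.IsPath ∧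
        (Walk.cons hz p.reverse).reverse.length = G.dist u v) := by
    intro z hz p hp hpl hmem
    constructor
    · rw [Walk.isPath_reverse_iff, Walk.cons_isPath_iff]
      exact ⟨(Walk.isPath_reverse_iff p).mpr hp, by simpa using hmem⟩
    · simp only [Walk.length_reverse, Walk.length_cons]
      omega
  obtain ⟨hPp, hPl⟩ := mkP x hvx px hpx (by omega) hvnx
  obtain ⟨hQp, hQl⟩ := mkP y hvy py hpy (by omega) hvny
  obtain ⟨p₀, -, hp₀u⟩ := huniq u v
  have hPQ : (Walk.cons hvx px.reverse).reverse = (Walk.cons hvy py.reverse).reverse := by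
    rw [hp₀u _ ⟨hPp, hPl⟩, hp₀u _ ⟨hQp, hQl⟩]
  have hPQ' : (Walk.cons hvx px.reverse) = (Walk.cons hvy py.reverse) := by
    have := congrArg Walk.reverse hPQ
    simpa using this
  have := congrArg (fun w => w.getVert 1) hPQ'
  simp only [Walk.getVert_cons_succ, Walk.getVert_zero] at this
  exact hxy this
end

section
/- Let G be a finite geodetic graph that is Hamiltonian (contains a cycle passing through every vertex exactly once). Then every vertex of G has at least two antipodes, i.e. for every vertex u there are at least two distinct vertices attaining the maximum distance from u. -/
/-! If `v` were the only antipode of `u`, every neighbour of `v` would lie one step closer to `u`.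
A Hamiltonian cycle gives `v` two distinct neighbours `a` and `b`, and extending geodesics from `u`
to `a` and to `b` by the edge to `v` yields two different geodesics from `u` to `v`. -/

open SimpleGraph

section

variable {V : Type*} {G : SimpleGraph V}

lemma SimpleGraph.Walk.IsCycle.exists_adj_ne_adj {x v : V} {c : G.Walk x x} (hc : c.IsCycle)
    (hv : v ∈ c.support) : ∃ a b, a ≠ b ∧ G.Adj v a ∧ G.Adj v b := by
  obtain ⟨a, b, hab, hset⟩ := Set.ncard_eq_two.mp (hc.ncard_neighborSet_toSubgraph_eq_two hv)
  have ha : a ∈ c.toSubgraph.neighborSet v := hset ▸ Set.mem_insert a {b}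
  have hb : b ∈ c.toSubgraph.neighborSet v := hset ▸ Set.mem_insert_of_mem a rfl
  exact ⟨a, b, hab, ha.adj_sub, hb.adj_sub⟩

lemma exists_isAntipode [Finite V] (G : SimpleGraph V) (u : V) : ∃ v, IsAntipode G u v :=
  haveI : Nonempty V := ⟨u⟩
  Finite.exists_max (G.dist u)

lemma IsAntipode.isAntipode_or_dist_add_one_eq {u v w : V} (hv : IsAntipode G u v)
    (hvw : G.Adj v w) : IsAntipode G u w ∨ G.dist u w + 1 = G.dist u v := by
  by_cases hw : G.dist u w = G.dist u v
  · exact Or.inl fun x => hw ▸ hv x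
  · have := hv w
    rcases hvw.diff_dist_adj (u := u) with h | h | h <;> omega

lemma IsGeodetic.eq_of_length_eq_dist (hG : IsGeodetic G) {u v : V} {p q : G.Walk u v}
    (hp : p.length = G.dist u v) (hq : q.length = G.dist u v) : p = q :=
  (hG.2 u v).unique ⟨p.isPath_of_length_eq_dist hp, hp⟩ ⟨q.isPath_of_length_eq_dist hq, hq⟩

lemma IsGeodetic.eq_of_adj_of_dist_add_one_eq_s17 (hG : IsGeodetic G) {u v a b : V}
    (ha : G.Adj a v) (hb : G.Adj b v) (hda : G.dist u a + 1 = G.dist u v)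
    (hdb : G.dist u b + 1 = G.dist u v) : a = b := by
  obtain ⟨p, hp⟩ := hG.1.exists_walk_length_eq_dist u a
  obtain ⟨q, hq⟩ := hG.1.exists_walk_length_eq_dist u b
  have hpq : p.concat ha = q.concat hb := hG.eq_of_length_eq_dist
    (by rw [Walk.length_concat, hp, hda]) (by rw [Walk.length_concat, hq, hdb])
  exact (Walk.concat_inj hpq).1

lemma IsGeodetic.exists_ne_isAntipode (hG : IsGeodetic G) {u v a b : V} (hv : IsAntipode G u v)
    (hab : a ≠ b) (ha : G.Adj v a) (hb : G.Adj v b) : ∃ w, w ≠ v ∧ IsAntipode G u w := by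
  rcases hv.isAntipode_or_dist_add_one_eq ha with ha' | hda
  · exact ⟨a, ha.ne.symm, ha'⟩
  rcases hv.isAntipode_or_dist_add_one_eq hb with hb' | hdb
  · exact ⟨b, hb.ne.symm, hb'⟩
  exact absurd (hG.eq_of_adj_of_dist_add_one_eq_s17 ha.symm hb.symm hda hdb) hab

end

/-- In a finite geodetic Hamiltonian graph,
every vertex has at least two antipodes. -/
theorem stmt_17 {V : Type*} [Fintype V] (G : SimpleGraph V) (hG : IsGeodetic G)
    (hham : ∃ (x : V) (c : G.Walk x x), c.IsCycle ∧ ∀ w : V, w ∈ c.support) :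
    ∀ u : V, ∃ v w : V, v ≠ w ∧ IsAntipode G u v ∧ IsAntipode G u w := by
  obtain ⟨x, c, hc, hspan⟩ := hham
  intro u
  obtain ⟨v, hv⟩ := exists_isAntipode G u
  obtain ⟨a, b, hab, ha, hb⟩ := hc.exists_adj_ne_adj (hspan v)
  obtain ⟨w, hwv, hw⟩ := hG.exists_ne_isAntipode hv hab ha hb
  exact ⟨v, w, hwv.symm, hv, hw⟩
end

section
/- For every finite connected simple graph G there exists an assignment of positive integer weights to the edges of G such that the resulting weighted graph is simultaneously geodetic and antipodal: for every pair of vertices there is exactly one path of minimum total weight between them, and every vertex has exactly one vertex at maximum weighted distance from it. -/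
/-!
Weight each edge `e` by `2 ^ enc e` for an injective `enc : Sym2 V → ℕ`. The weighted length
of a path is then the binary number whose set bits are the codes of its edges, so two paths from the
same vertex with equal lengths have the same edges and therefore coincide. This gives uniqueness
of geodesics, and it makes `x ↦ wDist G w u x` injective, so on a finite vertex set its maximum
is attained exactly once.
-/

open SimpleGraph

/-- The *length* of a walk in a graph whose edges carry weights `w`:
the sum of the weights of its edges. -/
def wLength {V : Type*} {G : SimpleGraph V} (w : Sym2 V → ℕ) {u v : V} (p : G.Walk u v) : ℕ :=
  (p.edges.map w).sum

/-- The weighted distance between two vertices: the minimum weighted length of a path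
between them. -/
noncomputable def wDist {V : Type*} (G : SimpleGraph V) (w : Sym2 V → ℕ) (u v : V) : ℕ :=
  sInf {n : ℕ | ∃ p : G.Walk u v, p.IsPath ∧ wLength w p = n}

lemma Function.Injective.existsUnique_forall_le {α β : Type*} [Finite α] [Nonempty α]
    [LinearOrder β] {f : α → β} (hf : Function.Injective f) : ∃! a, ∀ x, f x ≤ f a := by
  obtain ⟨a, ha⟩ := Finite.exists_max f
  exact ⟨a, ha, fun b hb ↦ hf (le_antisymm (ha b) (hb a))⟩

lemma Finset.sum_two_pow_comp_injective {α : Type*} [DecidableEq α] {enc : α → ℕ}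
    (henc : Function.Injective enc) :
    Function.Injective (fun s : Finset α ↦ ∑ a ∈ s, 2 ^ enc a) := by
  intro s t hst
  have himage : ∑ i ∈ s.image enc, 2 ^ i = ∑ i ∈ t.image enc, 2 ^ i := by
    rwa [Finset.sum_image henc.injOn, Finset.sum_image henc.injOn]
  exact Finset.image_injective henc (Finset.geomSum_injective le_rfl himage)

namespace SimpleGraph.Walk

variable {V : Type*} {G : SimpleGraph V}

lemma mem_edges_tail_iff_of_isPath {u b v : V} {h : G.Adj u b} {p : G.Walk b v}
    (hp : (cons h p).IsPath) (e : Sym2 V) :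
    e ∈ p.edges ↔ e ∈ (cons h p).edges ∧ e ≠ s(u, b) := by
  have hu : s(u, b) ∉ p.edges := fun he ↦
    ((cons_isPath_iff h p).mp hp).2 (p.fst_mem_support_of_mem_edges he)
  rw [edges_cons, List.mem_cons]
  constructor
  · rintro he
    exact ⟨Or.inr he, fun heq ↦ hu (heq ▸ he)⟩
  · rintro ⟨he | he, hne⟩
    · exact absurd he hne
    · exact he

lemma IsPath.exists_eq_copy_of_mem_edges_iff {u v v' : V} {p : G.Walk u v} {q : G.Walk u v'}
    (hp : p.IsPath) (hq : q.IsPath) (h : ∀ e, e ∈ p.edges ↔ e ∈ q.edges) :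
    ∃ hv : v' = v, p = q.copy rfl hv := by
  induction p with
  | nil =>
    cases q with
    | nil => exact ⟨rfl, rfl⟩
    | cons _ _ => simpa using (h _).mpr List.mem_cons_self
  | @cons u a v ha p' ih =>
    cases q with
    | nil => simpa using (h _).mp List.mem_cons_self
    | @cons _ b _ hb q' =>
      have hba : b = a := by
        have hmem : s(u, b) ∈ (cons ha p').edges := (h _).mpr List.mem_cons_self
        rcases List.mem_cons.mp hmem with hmem | hmem
        · exact Sym2.congr_right.mp hmem
        · exact absurd (p'.fst_mem_support_of_mem_edges hmem) ((cons_isPath_iff ha p').mp hp).2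
      subst hba
      obtain ⟨rfl, rfl⟩ := ih hp.of_cons hq.of_cons fun e ↦ by
        rw [mem_edges_tail_iff_of_isPath hp, mem_edges_tail_iff_of_isPath hq, h]
      exact ⟨rfl, rfl⟩

end SimpleGraph.Walk

section Weighted

variable {V : Type*} {G : SimpleGraph V}

lemma wLength_eq_sum_edges_toFinset [DecidableEq V] (w : Sym2 V → ℕ) {u v : V} {p : G.Walk u v}
    (hp : p.IsPath) : wLength w p = ∑ e ∈ p.edges.toFinset, w e :=
  (List.sum_toFinset w hp.edges_nodup).symm

lemma SimpleGraph.Walk.IsPath.exists_eq_copy_of_wLength_two_pow_eq {enc : Sym2 V → ℕ}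
    (henc : Function.Injective enc) {u v v' : V} {p : G.Walk u v} {q : G.Walk u v'}
    (hp : p.IsPath) (hq : q.IsPath)
    (hpq : wLength (fun e ↦ 2 ^ enc e) p = wLength (fun e ↦ 2 ^ enc e) q) :
    ∃ hv : v' = v, p = q.copy rfl hv := by
  classical
  rw [wLength_eq_sum_edges_toFinset _ hp, wLength_eq_sum_edges_toFinset _ hq] at hpq
  have hedges := Finset.sum_two_pow_comp_injective henc hpq
  exact hp.exists_eq_copy_of_mem_edges_iff hq fun e ↦ by
    rw [← List.mem_toFinset, hedges, List.mem_toFinset]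

lemma exists_isPath_wLength_eq_wDist (w : Sym2 V → ℕ) {u v : V} (huv : G.Reachable u v) :
    ∃ p : G.Walk u v, p.IsPath ∧ wLength w p = wDist G w u v := by
  obtain ⟨q, hq⟩ := huv.exists_isPath
  exact Nat.sInf_mem (s := {n | ∃ p : G.Walk u v, p.IsPath ∧ wLength w p = n})
    ⟨_, q, hq, rfl⟩

end Weighted

/-- Every finite connected graph admits an assignment of positive integer weights to its
edges making it simultaneously geodetic (between any two vertices there is exactly one path
of minimum total weight) and antipodal (every vertex has exactly one vertex at maximum
weighted distance from it). -/
theorem stmt_18 {V : Type*} [Fintype V] (G : SimpleGraph V) (hconn : G.Connected) :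
    ∃ w : Sym2 V → ℕ,
      (∀ e ∈ G.edgeSet, 0 < w e) ∧
      (∀ u v : V, ∃! p : G.Walk u v, p.IsPath ∧ wLength w p = wDist G w u v) ∧
      (∀ u : V, ∃! v : V, ∀ x : V, wDist G w u x ≤ wDist G w u v) := by
  obtain ⟨enc, henc⟩ := Countable.exists_injective_nat (Sym2 V)
  have geodesic := fun u v ↦ exists_isPath_wLength_eq_wDist (fun e ↦ 2 ^ enc e) (hconn u v)
  refine ⟨fun e ↦ 2 ^ enc e, fun _ _ ↦ Nat.two_pow_pos _, fun u v ↦ ?_, fun u ↦ ?_⟩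
  · obtain ⟨p, hp, hpd⟩ := geodesic u v
    refine ⟨p, ⟨hp, hpd⟩, fun q ⟨hq, hqd⟩ ↦ ?_⟩
    exact (hq.exists_eq_copy_of_wLength_two_pow_eq henc hp (hqd.trans hpd.symm)).2.trans
      p.copy_rfl_rfl
  · have : Nonempty V := hconn.nonempty
    refine Function.Injective.existsUnique_forall_le fun x y hxy ↦ ?_
    obtain ⟨p, hp, hpd⟩ := geodesic u x
    obtain ⟨q, hq, hqd⟩ := geodesic u y
    obtain ⟨hyx, -⟩ :=
      hp.exists_eq_copy_of_wLength_two_pow_eq henc hq (hpd.trans (hxy.trans hqd.symm))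
    exact hyx.symm
end

section
/- Let H be a finite simple graph with a positive integer weight assigned to each edge, such that for no pair of vertices of H do there exist two distinct geodesics of length two between them. Then there exists a finite simple graph G with positive integer edge weights such that the weighted graph G is geodetic (between any two vertices of G there is exactly one geodesic), H is an induced subgraph of G whose edge weights are preserved, and every edge of G not belonging to H has weight 1 or 2. -/
/-!
For every pair `{u, v}` of distinct vertices of `H` at weighted distance more than `2`, add a
vertex `m` joined to `u` and `v` by edges of weight `1`; join `m` by an edge of weight `2` to every
other vertex of `H` having no unit edge to `u` or `v`, and to every new vertex whose pair is disjoint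
from `{u, v}`. Now any two vertices are at distance at most `2`, and with positive integer weights
a path of weight at most `2` is the unique geodesic once no other path with one or two edges is as
light. Going through the kinds of pairs, the only possible competition lies inside `H`: two
geodesics of weight `2`, which the hypothesis excludes.
-/

open SimpleGraph

section WeightedGraph

variable {V : Type*} {G : SimpleGraph V} {w : Sym2 V → ℕ}

@[simp]
lemma wLength_nil {a : V} : wLength w (Walk.nil : G.Walk a a) = 0 := rfl

@[simp]
lemma wLength_cons {a b c : V} (h : G.Adj a b) (p : G.Walk b c) :
    wLength w (Walk.cons h p) = w s(a, b) + wLength w p := by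
  simp [wLength]

@[simp]
lemma wLength_reverse {a b : V} (p : G.Walk a b) : wLength w p.reverse = wLength w p := by
  simp [wLength, List.sum_reverse]

lemma length_le_wLength (hw : ∀ e ∈ G.edgeSet, 0 < w e) {a b : V} (p : G.Walk a b) :
    p.length ≤ wLength w p := by
  induction p with
  | nil => simp
  | cons h p ih =>
    have : 0 < w s(_, _) := hw _ h
    simp only [Walk.length_cons, wLength_cons]
    omega

lemma wDist_comm (a b : V) : wDist G w a b = wDist G w b a := by
  unfold wDist
  congr 1
  ext n
  exact ⟨fun ⟨p, hp, hn⟩ => ⟨p.reverse, hp.reverse, by rw [wLength_reverse, hn]⟩,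
    fun ⟨p, hp, hn⟩ => ⟨p.reverse, hp.reverse, by rw [wLength_reverse, hn]⟩⟩

variable (G w) in
def HasUniqueGeodesic (a b : V) : Prop :=
  ∃! p : G.Walk a b, p.IsPath ∧ wLength w p = wDist G w a b

lemma HasUniqueGeodesic.symm {a b : V} (h : HasUniqueGeodesic G w a b) :
    HasUniqueGeodesic G w b a := by
  obtain ⟨p, ⟨hp, hpw⟩, huniq⟩ := h
  refine ⟨p.reverse, ⟨hp.reverse, by rw [wLength_reverse, hpw, wDist_comm]⟩, ?_⟩
  rintro q ⟨hq, hqw⟩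
  rw [← huniq q.reverse ⟨hq.reverse, by rw [wLength_reverse, hqw, wDist_comm]⟩,
    Walk.reverse_reverse]

lemma hasUniqueGeodesic_of_forall_lt {a b : V} (p : G.Walk a b) (hp : p.IsPath)
    (hlt : ∀ q : G.Walk a b, q.IsPath → q ≠ p → wLength w p < wLength w q) :
    HasUniqueGeodesic G w a b := by
  have hdist : wDist G w a b = wLength w p := by
    refine le_antisymm (Nat.sInf_le ⟨p, hp, rfl⟩) (le_csInf ⟨_, p, hp, rfl⟩ ?_)
    rintro n ⟨q, hq, rfl⟩
    obtain rfl | hne := eq_or_ne q p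
    exacts [le_rfl, (hlt q hq hne).le]
  refine ⟨p, ⟨hp, hdist.symm⟩, fun q ⟨hq, hqw⟩ => ?_⟩
  by_contra hne
  exact (hlt q hq hne).ne' (hqw.trans hdist)

lemma hasUniqueGeodesic_self (a : V) : HasUniqueGeodesic G w a a :=
  hasUniqueGeodesic_of_forall_lt Walk.nil (by simp) fun _ hq hne =>
    absurd (Walk.eq_nil_iff_nil.mpr (Walk.isPath_iff_nil.mp hq)) hne

variable (G w) in
def IsUnitEdge (a b : V) : Prop := G.Adj a b ∧ w s(a, b) = 1

lemma IsUnitEdge.symm {a b : V} (h : IsUnitEdge G w a b) : IsUnitEdge G w b a :=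
  ⟨h.1.symm, Sym2.eq_swap ▸ h.2⟩

variable (G w) in
def IsWithinTwo (a b : V) : Prop :=
  IsUnitEdge G w a b ∨ (G.Adj a b ∧ w s(a, b) = 2) ∨
    ∃ c, IsUnitEdge G w a c ∧ IsUnitEdge G w c b

lemma IsWithinTwo.symm {a b : V} (h : IsWithinTwo G w a b) : IsWithinTwo G w b a := by
  rcases h with h | ⟨h, h2⟩ | ⟨c, hac, hcb⟩
  exacts [Or.inl h.symm, Or.inr (Or.inl ⟨h.symm, Sym2.eq_swap ▸ h2⟩),
    Or.inr (Or.inr ⟨c, hcb.symm, hac.symm⟩)]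

section PositiveWeights

variable (hw : ∀ e ∈ G.edgeSet, 0 < w e)
include hw

-- Competitors with three or more edges weigh at least `3`.
lemma hasUniqueGeodesic_of_short {a b : V} (p : G.Walk a b) (hp : p.IsPath)
    (hp2 : wLength w p ≤ 2)
    (hedge : ∀ h : G.Adj a b, h.toWalk ≠ p → wLength w p < w s(a, b))
    (hmid : ∀ c (hac : G.Adj a c) (hcb : G.Adj c b), Walk.cons hac hcb.toWalk ≠ p →
      wLength w p < w s(a, c) + w s(c, b)) :
    HasUniqueGeodesic G w a b := by
  refine hasUniqueGeodesic_of_forall_lt p hp fun q hq hne => ?_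
  match q, hq, hne with
  | .nil, _, hne => exact absurd (Walk.eq_nil_iff_nil.mpr (Walk.isPath_iff_nil.mp hp)).symm hne
  | .cons h .nil, _, hne => simpa using hedge h hne
  | .cons hac (.cons hcb .nil), _, hne => simpa using hmid _ hac hcb hne
  | .cons h (.cons h' (.cons h'' q)), _, _ =>
    have := length_le_wLength hw (.cons h (.cons h' (.cons h'' q)))
    simp only [Walk.length_cons] at this
    omega

lemma hasUniqueGeodesic_of_isUnitEdge {a b : V} (h : IsUnitEdge G w a b) :
    HasUniqueGeodesic G w a b := by
  refine hasUniqueGeodesic_of_short hw h.1.toWalk (by simp [h.1.ne]) (by simp [h.2])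
    (fun _ hne => absurd rfl hne) fun c hac hcb _ => ?_
  have := hw s(a, c) hac
  have := hw s(c, b) hcb
  simp only [Adj.toWalk, wLength_cons, wLength_nil, h.2]
  omega

lemma hasUniqueGeodesic_of_weight_two {a b : V} (h : G.Adj a b) (h2 : w s(a, b) = 2)
    (hmid : ∀ c, IsUnitEdge G w a c → ¬ IsUnitEdge G w c b) :
    HasUniqueGeodesic G w a b := by
  refine hasUniqueGeodesic_of_short hw h.toWalk (by simp [h.ne]) (by simp [h2])
    (fun _ hne => absurd rfl hne) fun c hac hcb _ => ?_
  have h1 := hw s(a, c) hac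
  have h2' := hw s(c, b) hcb
  have : ¬ (w s(a, c) = 1 ∧ w s(c, b) = 1) := fun ⟨e1, e2⟩ => hmid c ⟨hac, e1⟩ ⟨hcb, e2⟩
  simp only [Adj.toWalk, wLength_cons, wLength_nil, h2]
  omega

lemma hasUniqueGeodesic_of_unique_midpoint {a b c : V} (hab : a ≠ b)
    (hac : IsUnitEdge G w a c) (hcb : IsUnitEdge G w c b)
    (hedge : G.Adj a b → 2 < w s(a, b))
    (hmid : ∀ c', IsUnitEdge G w a c' → IsUnitEdge G w c' b → c' = c) :
    HasUniqueGeodesic G w a b := by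
  refine hasUniqueGeodesic_of_short hw (.cons hac.1 hcb.1.toWalk)
    (by simp [Walk.cons_isPath_iff, hab, hac.1.ne, hcb.1.ne]) (by simp [hac.2, hcb.2])
    (fun h _ => by simpa [hac.2, hcb.2] using hedge h) fun c' hac' hcb' hne => ?_
  have h1 := hw s(a, c') hac'
  have h2 := hw s(c', b) hcb'
  have : ¬ (w s(a, c') = 1 ∧ w s(c', b) = 1) := by
    rintro ⟨e1, e2⟩
    obtain rfl := hmid c' ⟨hac', e1⟩ ⟨hcb', e2⟩
    exact hne rfl
  simp only [Adj.toWalk, wLength_cons, wLength_nil, hac.2, hcb.2]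
  omega

lemma wDist_eq_two {a b : V} (hab : ¬ IsUnitEdge G w a b) {p : G.Walk a b} (hp : p.IsPath)
    (hp2 : wLength w p = 2) : wDist G w a b = 2 := by
  refine le_antisymm (Nat.sInf_le ⟨p, hp, hp2⟩) (le_csInf ⟨2, p, hp, hp2⟩ ?_)
  rintro n ⟨q, hq, rfl⟩
  match q, hq with
  | .nil, _ =>
    rw [Walk.eq_nil_iff_nil.mpr (Walk.isPath_iff_nil.mp hp)] at hp2
    simp at hp2
  | .cons h .nil, _ =>
    have := hw s(a, b) h
    have : w s(a, b) ≠ 1 := fun h1 => hab ⟨h, h1⟩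
    simp only [wLength_cons, wLength_nil]
    omega
  | .cons h (.cons h' q), _ =>
    have := length_le_wLength hw (.cons h (.cons h' q))
    simp only [Walk.length_cons] at this
    omega

end PositiveWeights

variable (G w) in
def NoTwoGeodesicsOfWeightTwo : Prop :=
  ¬ ∃ (u v : V) (p q : G.Walk u v), p ≠ q ∧ p.IsPath ∧ q.IsPath ∧
    wLength w p = wDist G w u v ∧ wLength w q = wDist G w u v ∧
    wLength w p = 2 ∧ wLength w q = 2

namespace NoTwoGeodesicsOfWeightTwo

variable (hG : NoTwoGeodesicsOfWeightTwo G w) (hw : ∀ e ∈ G.edgeSet, 0 < w e)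
include hG hw

lemma eq_of_wLength_eq_two {a b : V} (hab : ¬ IsUnitEdge G w a b) {p q : G.Walk a b}
    (hp : p.IsPath) (hq : q.IsPath) (hp2 : wLength w p = 2) (hq2 : wLength w q = 2) :
    p = q := by
  by_contra hne
  have hd := wDist_eq_two hw hab hp hp2
  exact hG ⟨a, b, p, q, hne, hp, hq, hp2.trans hd.symm, hq2.trans hd.symm, hp2, hq2⟩

lemma midpoint_unique {a b c c' : V} (hab : a ≠ b) (hab' : ¬ IsUnitEdge G w a b)
    (hac : IsUnitEdge G w a c) (hcb : IsUnitEdge G w c b)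
    (hac' : IsUnitEdge G w a c') (hc'b : IsUnitEdge G w c' b) : c = c' := by
  have h := hG.eq_of_wLength_eq_two hw hab' (p := .cons hac.1 hcb.1.toWalk)
    (q := .cons hac'.1 hc'b.1.toWalk)
    (by simp [Walk.cons_isPath_iff, hab, hac.1.ne, hcb.1.ne])
    (by simp [Walk.cons_isPath_iff, hab, hac'.1.ne, hc'b.1.ne])
    (by simp [hac.2, hcb.2]) (by simp [hac'.2, hc'b.2])
  simpa using congrArg Walk.support h

lemma not_isUnitEdge_of_weight_two {a b c : V} (h : G.Adj a b) (h2 : w s(a, b) = 2)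
    (hac : IsUnitEdge G w a c) : ¬ IsUnitEdge G w c b := fun hcb => by
  have hab : ¬ IsUnitEdge G w a b := fun h1 => by simp [h1.2] at h2
  have h := hG.eq_of_wLength_eq_two hw hab (p := h.toWalk) (q := .cons hac.1 hcb.1.toWalk)
    (by simp [h.ne]) (by simp [Walk.cons_isPath_iff, h.ne, hac.1.ne, hcb.1.ne])
    (by simp [h2]) (by simp [hac.2, hcb.2])
  simpa using congrArg Walk.length h

end NoTwoGeodesicsOfWeightTwo

end WeightedGraph

namespace GeodeticExtension

variable {W : Type*} (H : SimpleGraph W) (wH : Sym2 W → ℕ)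

def IsFar (u v : W) : Prop := u ≠ v ∧ ¬ IsWithinTwo H wH u v

lemma isFar_symm : Std.Symm (IsFar H wH) := ⟨fun _ _ h => ⟨h.1.symm, fun h' => h.2 h'.symm⟩⟩

def farPairs : Set (Sym2 W) := Sym2.fromRel (isFar_symm H wH)

abbrev Vertex := W ⊕ farPairs H wH

def extAdj : Vertex H wH → Vertex H wH → Prop
  | .inl u, .inl v => H.Adj u v
  | .inl x, .inr p | .inr p, .inl x => x ∈ p.1 ∨ ∀ a ∈ p.1, ¬ IsUnitEdge H wH a x
  | .inr p, .inr q => p ≠ q ∧ ∀ a ∈ p.1, a ∉ q.1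

def extGraph : SimpleGraph (Vertex H wH) where
  Adj := extAdj H wH
  symm := ⟨by
    rintro (u | p) (v | q) h
    exacts [h.symm, h, h, ⟨Ne.symm h.1, fun a ha hb => h.2 a hb ha⟩]⟩
  loopless := ⟨by
    rintro (u | p) h
    exacts [H.irrefl h, h.1 rfl]⟩

open Classical in
noncomputable def weight : Vertex H wH → Vertex H wH → ℕ
  | .inl u, .inl v => wH s(u, v)
  | .inl x, .inr p | .inr p, .inl x => if x ∈ p.1 then 1 else 2
  | .inr _, .inr _ => 2

noncomputable def extWeight : Sym2 (Vertex H wH) → ℕ :=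
  Sym2.lift ⟨weight H wH, by
    rintro (u | p) (v | q) <;> simp only [weight]
    rw [Sym2.eq_swap]⟩

variable {H wH}

lemma mem_farPairs {u v : W} : s(u, v) ∈ farPairs H wH ↔ IsFar H wH u v := Sym2.fromRel_prop

@[simp]
lemma extWeight_mk (x y : Vertex H wH) : extWeight H wH s(x, y) = weight H wH x y :=
  Sym2.lift_mk _ _ _

lemma isUnitEdge_inl_inr {x : W} {p : farPairs H wH} :
    IsUnitEdge (extGraph H wH) (extWeight H wH) (.inl x) (.inr p) ↔ x ∈ p.1 := by
  by_cases hx : x ∈ p.1 <;> simp [IsUnitEdge, extGraph, extAdj, weight, hx]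

lemma isUnitEdge_inr_inl {x : W} {p : farPairs H wH} :
    IsUnitEdge (extGraph H wH) (extWeight H wH) (.inr p) (.inl x) ↔ x ∈ p.1 :=
  ⟨fun h => isUnitEdge_inl_inr.mp h.symm, fun h => (isUnitEdge_inl_inr.mpr h).symm⟩

lemma not_isUnitEdge_inr_inr {p q : farPairs H wH} :
    ¬ IsUnitEdge (extGraph H wH) (extWeight H wH) (.inr p) (.inr q) := by
  simp [IsUnitEdge, weight]

lemma extWeight_pos (hpos : ∀ e ∈ H.edgeSet, 0 < wH e) :
    ∀ e ∈ (extGraph H wH).edgeSet, 0 < extWeight H wH e := by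
  rintro ⟨x, y⟩ he
  rcases x with u | p <;> rcases y with v | q
  · exact hpos s(u, v) he
  all_goals simp only [extWeight_mk, weight]; positivity

lemma extWeight_eq_one_or_two {e : Sym2 (Vertex H wH)} (he : e ∈ (extGraph H wH).edgeSet)
    (hnew : ¬ ∃ a b, H.Adj a b ∧ e = s(.inl a, .inl b)) :
    extWeight H wH e = 1 ∨ extWeight H wH e = 2 := by
  induction e using Sym2.ind with | _ x y => ?_
  rcases x with u | p <;> rcases y with v | q
  · exact absurd ⟨u, v, he, rfl⟩ hnew
  all_goals simp only [extWeight_mk, weight]; grind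

lemma isFar_of_mem {p : farPairs H wH} {u v : W} (hu : u ∈ p.1) (hv : v ∈ p.1) (hne : u ≠ v) :
    IsFar H wH u v := by
  have hp := p.2
  rwa [(Sym2.mem_and_mem_iff hne).mp ⟨hu, hv⟩, mem_farPairs] at hp

lemma eq_of_isUnitEdge_of_mem {p : farPairs H wH} {x u v : W} (hu : u ∈ p.1) (hv : v ∈ p.1)
    (hxu : IsUnitEdge H wH x u) (hxv : IsUnitEdge H wH x v) : u = v := by
  by_contra hne
  exact (isFar_of_mem hu hv hne).2 (Or.inr (Or.inr ⟨x, hxu.symm, hxv⟩))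

section Geodetic

variable (hpos : ∀ e ∈ H.edgeSet, 0 < wH e)
include hpos

lemma hasUniqueGeodesic_inl_inr (x : W) (P : farPairs H wH) :
    HasUniqueGeodesic (extGraph H wH) (extWeight H wH) (.inl x) (.inr P) := by
  have hw := extWeight_pos hpos
  by_cases hx : x ∈ P.1
  · exact hasUniqueGeodesic_of_isUnitEdge hw (isUnitEdge_inl_inr.mpr hx)
  by_cases hunit : ∃ u ∈ P.1, IsUnitEdge H wH x u
  · obtain ⟨u, huP, hxu⟩ := hunit
    refine hasUniqueGeodesic_of_unique_midpoint hw (c := .inl u) (by simp) hxu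
      (isUnitEdge_inl_inr.mpr huP) (fun h => absurd hxu.symm ((h.resolve_left hx) u huP)) ?_
    rintro (y | Q) hxy hyP
    · exact congrArg Sum.inl (eq_of_isUnitEdge_of_mem (isUnitEdge_inl_inr.mp hyP) huP hxy hxu)
    · exact (not_isUnitEdge_inr_inr hyP).elim
  · refine hasUniqueGeodesic_of_weight_two hw
      (Or.inr fun a ha hax => hunit ⟨a, ha, hax.symm⟩) (by simp [weight, hx]) ?_
    rintro (y | Q) hxy hyP
    · exact hunit ⟨y, isUnitEdge_inl_inr.mp hyP, hxy⟩
    · exact not_isUnitEdge_inr_inr hyP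

lemma hasUniqueGeodesic_inr_inr (P Q : farPairs H wH) :
    HasUniqueGeodesic (extGraph H wH) (extWeight H wH) (.inr P) (.inr Q) := by
  have hw := extWeight_pos hpos
  obtain rfl | hne := eq_or_ne P Q
  · exact hasUniqueGeodesic_self _
  by_cases hshared : ∃ a ∈ P.1, a ∈ Q.1
  · obtain ⟨a, haP, haQ⟩ := hshared
    refine hasUniqueGeodesic_of_unique_midpoint hw (c := .inl a) (by simpa using hne)
      (isUnitEdge_inr_inl.mpr haP) (isUnitEdge_inl_inr.mpr haQ)
      (fun h => absurd haQ (h.2 a haP)) ?_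
    rintro (b | R) hPb hbQ
    · refine congrArg Sum.inl (by_contra fun hba => hne (Subtype.ext ?_))
      rw [(Sym2.mem_and_mem_iff hba).mp ⟨isUnitEdge_inr_inl.mp hPb, haP⟩,
        (Sym2.mem_and_mem_iff hba).mp ⟨isUnitEdge_inl_inr.mp hbQ, haQ⟩]
    · exact (not_isUnitEdge_inr_inr hPb).elim
  · refine hasUniqueGeodesic_of_weight_two hw ⟨hne, fun a ha hb => hshared ⟨a, ha, hb⟩⟩
      (by simp [weight]) ?_
    rintro (b | R) hPb hbQ
    · exact hshared ⟨b, isUnitEdge_inr_inl.mp hPb, isUnitEdge_inl_inr.mp hbQ⟩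
    · exact not_isUnitEdge_inr_inr hPb

lemma hasUniqueGeodesic_inl_inl (hno2 : NoTwoGeodesicsOfWeightTwo H wH) (u v : W) :
    HasUniqueGeodesic (extGraph H wH) (extWeight H wH) (.inl u) (.inl v) := by
  have hw := extWeight_pos hpos
  obtain rfl | hne := eq_or_ne u v
  · exact hasUniqueGeodesic_self _
  have hfar_of_mid : ∀ P : farPairs H wH,
      IsUnitEdge (extGraph H wH) (extWeight H wH) (.inl u) (.inr P) →
      IsUnitEdge (extGraph H wH) (extWeight H wH) (.inr P) (.inl v) → IsFar H wH u v :=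
    fun P huP hPv => isFar_of_mem (isUnitEdge_inl_inr.mp huP) (isUnitEdge_inr_inl.mp hPv) hne
  by_cases h1 : IsUnitEdge H wH u v
  · exact hasUniqueGeodesic_of_isUnitEdge hw h1
  by_cases h2 : H.Adj u v ∧ wH s(u, v) = 2
  · refine hasUniqueGeodesic_of_weight_two hw h2.1 h2.2 ?_
    rintro (x | P) hux hxv
    · exact hno2.not_isUnitEdge_of_weight_two hpos h2.1 h2.2 hux hxv
    · exact (hfar_of_mid P hux hxv).2 (Or.inr (Or.inl h2))
  have hedge : H.Adj u v → 2 < wH s(u, v) := fun h => by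
    have := hpos s(u, v) h
    have : wH s(u, v) ≠ 1 := fun h' => h1 ⟨h, h'⟩
    have : wH s(u, v) ≠ 2 := fun h' => h2 ⟨h, h'⟩
    omega
  by_cases h3 : ∃ x, IsUnitEdge H wH u x ∧ IsUnitEdge H wH x v
  · obtain ⟨x, hux, hxv⟩ := h3
    refine hasUniqueGeodesic_of_unique_midpoint hw (c := .inl x) (by simpa using hne) hux hxv
      hedge ?_
    rintro (y | P) huy hyv
    · exact congrArg Sum.inl (hno2.midpoint_unique hpos hne h1 huy hyv hux hxv)
    · exact ((hfar_of_mid P huy hyv).2 (Or.inr (Or.inr ⟨x, hux, hxv⟩))).elim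
  have hfar : IsFar H wH u v := ⟨hne, by rintro (h | h | h) <;> contradiction⟩
  refine hasUniqueGeodesic_of_unique_midpoint hw (c := .inr ⟨s(u, v), mem_farPairs.mpr hfar⟩)
    (by simpa using hne) (isUnitEdge_inl_inr.mpr (Sym2.mem_mk_left u v))
    (isUnitEdge_inr_inl.mpr (Sym2.mem_mk_right u v)) hedge ?_
  rintro (y | P) huy hyv
  · exact absurd ⟨y, huy, hyv⟩ h3
  · exact congrArg Sum.inr (Subtype.ext ((Sym2.mem_and_mem_iff hne).mp
      ⟨isUnitEdge_inl_inr.mp huy, isUnitEdge_inr_inl.mp hyv⟩))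

lemma hasUniqueGeodesic_extGraph (hno2 : NoTwoGeodesicsOfWeightTwo H wH) :
    ∀ x y : Vertex H wH, HasUniqueGeodesic (extGraph H wH) (extWeight H wH) x y := by
  rintro (u | P) (v | Q)
  exacts [hasUniqueGeodesic_inl_inl hpos hno2 u v, hasUniqueGeodesic_inl_inr hpos u Q,
    (hasUniqueGeodesic_inl_inr hpos v P).symm, hasUniqueGeodesic_inr_inr hpos P Q]

end Geodetic

end GeodeticExtension

/-- Let `H` be a finite graph with positive integer edge weights such that no pair of
vertices of `H` has two distinct weighted geodesics of length two between them.  Then there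
is a finite weighted geodetic graph `G` containing `H` as an induced subgraph with the same
edge weights, all added edges having weight `1` or `2`. -/
theorem stmt_19 {W : Type} [Fintype W] (H : SimpleGraph W) (wH : Sym2 W → ℕ)
    (hpos : ∀ e ∈ H.edgeSet, 0 < wH e)
    (hno2 : ¬ ∃ (u v : W) (p q : H.Walk u v), p ≠ q ∧ p.IsPath ∧ q.IsPath ∧
      wLength wH p = wDist H wH u v ∧ wLength wH q = wDist H wH u v ∧
      wLength wH p = 2 ∧ wLength wH q = 2) :
    ∃ (V : Type) (_ : Fintype V) (G : SimpleGraph V) (wG : Sym2 V → ℕ) (f : H ↪g G),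
      (∀ e ∈ G.edgeSet, 0 < wG e) ∧
      (∀ u v : V, ∃! p : G.Walk u v, p.IsPath ∧ wLength wG p = wDist G wG u v) ∧
      (∀ a b : W, H.Adj a b → wG s(f a, f b) = wH s(a, b)) ∧
      (∀ e ∈ G.edgeSet, (¬ ∃ a b : W, H.Adj a b ∧ e = s(f a, f b)) →
        wG e = 1 ∨ wG e = 2) := by
  classical
  open GeodeticExtension in
  exact ⟨Vertex H wH, inferInstance, extGraph H wH, extWeight H wH,
    ⟨⟨Sum.inl, Sum.inl_injective⟩, Iff.rfl⟩, extWeight_pos hpos,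
    hasUniqueGeodesic_extGraph hpos hno2, fun _ _ _ => rfl,
    fun _ he hnew => extWeight_eq_one_or_two he hnew⟩
end
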